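/- For open sets J, K ⊆ ℝ and names ρ, σ, τ: if J ⊩ ρ = σ and K ⊩ ρ ∈ τ, then (J ∩ K) ⊩ σ ∈ τ. -/

import Mathlib

/-- Names over ℝ: a name is a family of pairs of a name and an open set of reals. -/
inductive Name : Type 1
  | mk (ι : Type) (elem : ι → Name) (cond : ι → Set ℝ) (hopen : ∀ i, IsOpen (cond i)) : Name

universe u

/-- Natural (Hessenberg) sum of ordinals, as in Mathlib's former `Ordinal.nadd`. -/
noncomputable def Ordinal.nadd : Ordinal.{u} → Ordinal.{u} → Ordinal.{u}
  | a, b =>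
    max (Ordinal.blsub.{u, u} a fun a' _ => Ordinal.nadd a' b)
      (Ordinal.blsub.{u, u} b fun b' _ => Ordinal.nadd a b')
termination_by o₁ o₂ => (o₁, o₂)

namespace NaturalOps

scoped infixl:65 " ♯ " => Ordinal.nadd

end NaturalOps

open NaturalOps in
theorem Ordinal.nadd_lt_nadd_right {a b : Ordinal.{u}} (h : a < b) (c : Ordinal.{u}) :
    a ♯ c < b ♯ c := by
  rw [Ordinal.nadd.eq_1 b c]
  exact lt_max_of_lt_left (Ordinal.lt_blsub (fun a' _ => Ordinal.nadd a' c) a h)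

open NaturalOps in
theorem Ordinal.nadd_lt_nadd_left {b c : Ordinal.{u}} (h : b < c) (a : Ordinal.{u}) :
    a ♯ b < a ♯ c := by
  rw [Ordinal.nadd.eq_1 a c]
  exact lt_max_of_lt_right (Ordinal.lt_blsub (fun b' _ => Ordinal.nadd a b') b h)

open NaturalOps in
theorem Ordinal.nadd_comm : ∀ a b : Ordinal.{u}, a ♯ b = b ♯ a
  | a, b => by
    rw [Ordinal.nadd.eq_1 a b, Ordinal.nadd.eq_1 b a, max_comm]
    congr <;> ext c hc
    · exact Ordinal.nadd_comm a c
    · exact Ordinal.nadd_comm c b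
termination_by a b => (a, b)

namespace Name

/-- The index type of the family of pairs of a name. -/
def idx : Name → Type
  | mk ι _ _ _ => ι

/-- The name component of the `i`-th pair. -/
def elem : (σ : Name) → σ.idx → Name
  | mk _ e _ _ => e

/-- The open-set component of the `i`-th pair. -/
def cond : (σ : Name) → σ.idx → Set ℝ
  | mk _ _ c _ => c

theorem cond_isOpen : ∀ (σ : Name) (i : σ.idx), IsOpen (σ.cond i)
  | mk _ _ _ h => h

/-- Rank of a name, used for the recursive definition of forcing. -/
noncomputable def rank : Name → Ordinal.{0}
  | mk _ e _ _ => Ordinal.lsub fun i => rank (e i)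

theorem rank_elem_lt : ∀ (σ : Name) (i : σ.idx), (σ.elem i).rank < σ.rank
  | mk ι e c h, i => by
    simpa [rank, elem] using Ordinal.lt_lsub (fun i => rank (e i)) i

open NaturalOps

mutual
  /-- `feq σ τ J` means `J ⊩ σ = τ`. -/
  def feq (σ τ : Name) (J : Set ℝ) : Prop :=
    (∀ i : σ.idx, fmem (σ.elem i) τ (J ∩ σ.cond i)) ∧
    (∀ j : τ.idx, fmem (τ.elem j) σ (J ∩ τ.cond j))
  termination_by σ.rank ♯ τ.rank
  decreasing_by
    · exact Ordinal.nadd_lt_nadd_right (rank_elem_lt σ i) τ.rank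
    · rw [Ordinal.nadd_comm]
      exact Ordinal.nadd_lt_nadd_left (rank_elem_lt τ j) σ.rank

  /-- `fmem σ τ J` means `J ⊩ σ ∈ τ`. -/
  def fmem (σ τ : Name) (J : Set ℝ) : Prop :=
    ∀ r ∈ J, ∃ (j : τ.idx) (J' : Set ℝ), IsOpen J' ∧ r ∈ J' ∩ τ.cond j ∧
      feq σ (τ.elem j) (J' ∩ τ.cond j)
  termination_by σ.rank ♯ τ.rank
  decreasing_by
    exact Ordinal.nadd_lt_nadd_left (rank_elem_lt τ j) σ.rank
end

end Name

/-! If `J ⊩ ρ = σ` and `ρ` is forced into `τ` near `r ∈ J ∩ K` through a pair `⟨τⱼ, Jⱼ⟩` and an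
open `J'`, then transitivity of forced equality gives `J ∩ J' ∩ Jⱼ ⊩ σ = τⱼ`, so the open set
`J ∩ J'` witnesses `σ ∈ τ` near `r`. Transitivity is proved simultaneously with the congruence
`J ⊩ x ∈ σ`, `K ⊩ σ = τ` ⟹ `J ∩ K ⊩ x ∈ τ`. -/

open NaturalOps in
theorem Ordinal.nadd_lt_nadd {a b c d : Ordinal.{u}} (h₁ : a < b) (h₂ : c < d) :
    a ♯ c < b ♯ d :=
  (Ordinal.nadd_lt_nadd_left h₂ a).trans (Ordinal.nadd_lt_nadd_right h₁ d)

namespace Name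

open NaturalOps

theorem fmem.mono {σ τ : Name} {J J' : Set ℝ} (h : fmem σ τ J) (hsub : J' ⊆ J) :
    fmem σ τ J' := by
  rw [fmem] at h ⊢
  exact fun r hr => h r (hsub hr)

theorem feq.mono {σ τ : Name} {J J' : Set ℝ} (h : feq σ τ J) (hsub : J' ⊆ J) :
    feq σ τ J' := by
  rw [feq] at h ⊢
  exact ⟨fun i => (h.1 i).mono (Set.inter_subset_inter_left _ hsub),
    fun j => (h.2 j).mono (Set.inter_subset_inter_left _ hsub)⟩

theorem feq.symm {σ τ : Name} {J : Set ℝ} (h : feq σ τ J) : feq τ σ J := by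
  rw [feq] at h ⊢
  exact h.symm

/- Joint induction on `ρ.rank ♯ τ.rank ♯ σ.rank` (middle name last): `feq.trans` descends into an
outer name, `fmem.congr_right` into both `σ` and `τ` at once. -/
mutual

theorem feq.trans {ρ σ τ : Name} {J K : Set ℝ} (h₁ : feq ρ σ J) (h₂ : feq σ τ K) :
    feq ρ τ (J ∩ K) := by
  rw [feq]
  refine ⟨fun i => ?_, fun k => ?_⟩
  · rw [feq] at h₁
    exact (fmem.congr_right (h₁.1 i) h₂).mono (Set.inter_right_comm J K (ρ.cond i)).le
  · rw [feq] at h₂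
    exact (fmem.congr_right (h₂.2 k) h₁.symm).mono fun _ ⟨⟨hJ, hK⟩, hc⟩ => ⟨⟨hK, hc⟩, hJ⟩
termination_by ρ.rank ♯ τ.rank ♯ σ.rank
decreasing_by
  · exact Ordinal.nadd_lt_nadd_right
      (Ordinal.nadd_lt_nadd_right (rank_elem_lt ρ i) τ.rank) σ.rank
  · rw [Ordinal.nadd_comm (rank (τ.elem k)) ρ.rank]
    exact Ordinal.nadd_lt_nadd_right
      (Ordinal.nadd_lt_nadd_left (rank_elem_lt τ k) ρ.rank) σ.rank

theorem fmem.congr_right {x σ τ : Name} {J K : Set ℝ} (h₁ : fmem x σ J) (h₂ : feq σ τ K) :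
    fmem x τ (J ∩ K) := by
  rw [fmem] at h₁ ⊢
  rw [feq] at h₂
  intro r ⟨hrJ, hrK⟩
  obtain ⟨j, J₁, hJ₁, ⟨hrJ₁, hrσ⟩, hx⟩ := h₁ r hrJ
  have hσ := h₂.1 j
  rw [fmem] at hσ
  obtain ⟨k, J₂, hJ₂, ⟨hrJ₂, hrτ⟩, hστ⟩ := hσ r ⟨hrK, hrσ⟩
  refine ⟨k, J₁ ∩ σ.cond j ∩ J₂, (hJ₁.inter (cond_isOpen σ j)).inter hJ₂,
    ⟨⟨⟨hrJ₁, hrσ⟩, hrJ₂⟩, hrτ⟩, ?_⟩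
  exact (hx.trans hστ).mono (Set.inter_assoc _ _ _).le
termination_by x.rank ♯ τ.rank ♯ σ.rank
decreasing_by
  exact Ordinal.nadd_lt_nadd (Ordinal.nadd_lt_nadd_left (rank_elem_lt τ k) x.rank)
    (rank_elem_lt σ j)

end

end Name

theorem forces_mem_congr_left (J K : Set ℝ) (hJ : IsOpen J) (hK : IsOpen K) (ρ σ τ : Name)
    (h₁ : Name.feq ρ σ J) (h₂ : Name.fmem ρ τ K) : Name.fmem σ τ (J ∩ K) := by
  rw [Name.fmem] at h₂ ⊢
  intro r ⟨hrJ, hrK⟩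
  obtain ⟨j, J', hJ', ⟨hrJ', hrc⟩, hρ⟩ := h₂ r hrK
  exact ⟨j, J ∩ J', hJ.inter hJ', ⟨⟨hrJ, hrJ'⟩, hrc⟩,
    (h₁.symm.trans hρ).mono (Set.inter_assoc _ _ _).le⟩
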